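/- arXiv:2212.08866 — 2 statements merged into one kernel-verified Lean document; each statement's English description precedes it below -/
import Mathlib

section
/- Given an α-Hölder path X : [0,T] → ℝ^d and a twice continuously differentiable function F : ℝ^d → L(ℝ^d, ℝ^m), the pair (Y, Y') with Y = F∘X and Y' = DF∘X is a controlled path with respect to X; that is, the remainder R^Y_{st} := Y_{st} − Y'_s X_{st} is 2α-Hölder continuous. -/
/-!
On `[0,T]` the Hölder path `X` stays in a closed ball, which is compact and convex since `ℝ^d` is
finite-dimensional. There `F` and `DF` are `C¹`, hence Lipschitz, so `F ∘ X` and `DF ∘ X` inherit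
the `α`-Hölder bound of `X`. The mean value inequality for `F - DF(X_s)` along the segment
`[X_s, X_t]` bounds the remainder by `Lip(DF) ‖X_{st}‖²`, which is `O(|t - s| ^ (2α))`.
-/

open Set Metric

section HolderPath

variable {E G : Type*} [NormedAddCommGroup E] [NormedAddCommGroup G]

theorem mapsTo_closedBall_of_holder {X : ℝ → E} {T α C : ℝ} (hα : 0 ≤ α)
    (hX : ∀ s t : ℝ, s ∈ Icc 0 T → t ∈ Icc 0 T → ‖X t - X s‖ ≤ C * |t - s| ^ α) :
    MapsTo X (Icc 0 T) (closedBall (X 0) (|C| * T ^ α)) := by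
  intro t ht
  have h0 : (0 : ℝ) ∈ Icc 0 T := ⟨le_rfl, ht.1.trans ht.2⟩
  rw [mem_closedBall, dist_eq_norm]
  calc ‖X t - X 0‖ ≤ C * |t - 0| ^ α := hX 0 t h0 ht
    _ ≤ |C| * |t - 0| ^ α := by gcongr; exact le_abs_self C
    _ ≤ |C| * T ^ α := by
        rw [sub_zero, abs_of_nonneg ht.1]
        gcongr
        exacts [ht.1, ht.2]

theorem LipschitzOnWith.norm_comp_sub_le_of_holder {g : E → G} {K : NNReal} {S : Set E}
    (hg : LipschitzOnWith K g S) {X : ℝ → E} {I : Set ℝ} (hXS : MapsTo X I S) {α C : ℝ}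
    (hX : ∀ s t : ℝ, s ∈ I → t ∈ I → ‖X t - X s‖ ≤ C * |t - s| ^ α)
    {s t : ℝ} (hs : s ∈ I) (ht : t ∈ I) :
    ‖g (X t) - g (X s)‖ ≤ K * C * |t - s| ^ α :=
  calc ‖g (X t) - g (X s)‖ ≤ K * ‖X t - X s‖ := hg.norm_sub_le (hXS ht) (hXS hs)
    _ ≤ K * (C * |t - s| ^ α) := by gcongr; exact hX s t hs ht
    _ = K * C * |t - s| ^ α := by ring

end HolderPath

section TaylorRemainder

variable {E G : Type*} [NormedAddCommGroup E] [NormedSpace ℝ E]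
  [NormedAddCommGroup G] [NormedSpace ℝ G]

theorem Convex.norm_sub_sub_fderiv_le_of_lipschitzOnWith {f : E → G} {s : Set E} {K : NNReal}
    (hs : Convex ℝ s) (hf : ∀ x ∈ s, DifferentiableAt ℝ f x)
    (hf' : LipschitzOnWith K (fderiv ℝ f) s) {x y : E} (hx : x ∈ s) (hy : y ∈ s) :
    ‖f y - f x - fderiv ℝ f x (y - x)‖ ≤ K * ‖y - x‖ ^ 2 := by
  have hseg : segment ℝ x y ⊆ s := hs.segment_subset hx hy
  have hbound : ∀ z ∈ segment ℝ x y, ‖fderiv ℝ f z - fderiv ℝ f x‖ ≤ K * ‖y - x‖ := by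
    intro z hz
    calc ‖fderiv ℝ f z - fderiv ℝ f x‖ ≤ K * ‖z - x‖ := hf'.norm_sub_le (hseg hz) hx
      _ ≤ K * ‖y - x‖ := by
          gcongr
          have hsplit := dist_add_dist_of_mem_segment hz
          rw [← dist_eq_norm, ← dist_eq_norm, dist_comm z, dist_comm y]
          linarith [dist_nonneg (x := z) (y := y)]
  calc ‖f y - f x - fderiv ℝ f x (y - x)‖ ≤ K * ‖y - x‖ * ‖y - x‖ :=
        (convex_segment x y).norm_image_sub_le_of_norm_fderiv_le'
          (fun z hz => hf z (hseg hz)) hbound (left_mem_segment ℝ x y) (right_mem_segment ℝ x y)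
    _ = K * ‖y - x‖ ^ 2 := by ring

end TaylorRemainder

theorem smooth_function_of_path_is_controlled_general
    {d m : ℕ} (T α : ℝ) (hα : 1/3 < α)
    (X : ℝ → (Fin d → ℝ))
    (CX : ℝ)
    (hX : ∀ s t : ℝ, s ∈ Set.Icc 0 T → t ∈ Set.Icc 0 T →
      ‖X t - X s‖ ≤ CX * |t - s| ^ α)
    (F : (Fin d → ℝ) → ((Fin d → ℝ) →L[ℝ] (Fin m → ℝ)))
    (hF : ContDiff ℝ 2 F) :
    (∃ C : ℝ, ∀ s t : ℝ, s ∈ Set.Icc 0 T → t ∈ Set.Icc 0 T →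
        ‖F (X t) - F (X s)‖ ≤ C * |t - s| ^ α) ∧
    (∃ C : ℝ, ∀ s t : ℝ, s ∈ Set.Icc 0 T → t ∈ Set.Icc 0 T →
        ‖fderiv ℝ F (X t) - fderiv ℝ F (X s)‖ ≤ C * |t - s| ^ α) ∧
    (∃ C : ℝ, ∀ s t : ℝ, s ∈ Set.Icc 0 T → t ∈ Set.Icc 0 T → s ≤ t →
        ‖F (X t) - F (X s) - fderiv ℝ F (X s) (X t - X s)‖
          ≤ C * |t - s| ^ (2 * α)) := by
  have hXK := mapsTo_closedBall_of_holder (by linarith) hX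
  have hK : IsCompact (closedBall (X 0) (|CX| * T ^ α)) := isCompact_closedBall _ _
  have hKconv := convex_closedBall (X 0) (|CX| * T ^ α)
  obtain ⟨LF, hLF⟩ := hF.contDiffOn.exists_lipschitzOnWith two_ne_zero hKconv hK
  obtain ⟨LDF, hLDF⟩ :=
    (hF.fderiv_right le_rfl).contDiffOn.exists_lipschitzOnWith one_ne_zero hKconv hK
  refine ⟨⟨LF * CX, fun s t hs ht => hLF.norm_comp_sub_le_of_holder hXK hX hs ht⟩,
    ⟨LDF * CX, fun s t hs ht => hLDF.norm_comp_sub_le_of_holder hXK hX hs ht⟩,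
    ⟨LDF * CX ^ 2, fun s t hs ht _ => ?_⟩⟩
  calc ‖F (X t) - F (X s) - fderiv ℝ F (X s) (X t - X s)‖ ≤ LDF * ‖X t - X s‖ ^ 2 :=
        hKconv.norm_sub_sub_fderiv_le_of_lipschitzOnWith
          (fun x _ => hF.differentiable two_ne_zero x) hLDF (hXK hs) (hXK ht)
    _ ≤ LDF * (CX * |t - s| ^ α) ^ 2 := by gcongr; exact hX s t hs ht
    _ = LDF * CX ^ 2 * |t - s| ^ (2 * α) := by
        rw [mul_comm 2 α, Real.rpow_mul (abs_nonneg _), Real.rpow_two]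
        ring

/-- If `X : [0,T] → ℝ^d` is `α`-Hölder with `α ∈ (1/3, 1/2]` and
`F : ℝ^d → L(ℝ^d, ℝ^m)` is twice continuously differentiable, then the pair
`(Y, Y') = (F ∘ X, DF ∘ X)` is a controlled path with respect to `X`:
both `Y` and `Y'` are `α`-Hölder on `[0,T]` and the remainder
`R^Y_{st} = Y_t - Y_s - Y'_s (X_t - X_s)` is `2α`-Hölder on the simplex. -/
theorem smooth_function_of_path_is_controlled
    {d m : ℕ} (T α : ℝ) (hT : 0 < T) (hα : 1/3 < α) (hα' : α ≤ 1/2)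
    (X : ℝ → (Fin d → ℝ))
    (CX : ℝ)
    (hX : ∀ s t : ℝ, s ∈ Set.Icc 0 T → t ∈ Set.Icc 0 T →
      ‖X t - X s‖ ≤ CX * |t - s| ^ α)
    (F : (Fin d → ℝ) → ((Fin d → ℝ) →L[ℝ] (Fin m → ℝ)))
    (hF : ContDiff ℝ 2 F) :
    (∃ C : ℝ, ∀ s t : ℝ, s ∈ Set.Icc 0 T → t ∈ Set.Icc 0 T →
        ‖F (X t) - F (X s)‖ ≤ C * |t - s| ^ α) ∧
    (∃ C : ℝ, ∀ s t : ℝ, s ∈ Set.Icc 0 T → t ∈ Set.Icc 0 T →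
        ‖fderiv ℝ F (X t) - fderiv ℝ F (X s)‖ ≤ C * |t - s| ^ α) ∧
    (∃ C : ℝ, ∀ s t : ℝ, s ∈ Set.Icc 0 T → t ∈ Set.Icc 0 T → s ≤ t →
        ‖F (X t) - F (X s) - fderiv ℝ F (X s) (X t - X s)‖
          ≤ C * |t - s| ^ (2 * α)) :=
  smooth_function_of_path_is_controlled_general T α hα X CX hX F hF
end

section
/- If (Y, Y') is a controlled path with respect to X with values in ℝ and (Z, Z') is controlled with values in ℝ, then the product (YZ, Y'Z + YZ') is a controlled path with respect to X. -/
open Set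

lemma holder_bounded_aux {E : Type*} [NormedAddCommGroup E] {T α C : ℝ} (hT : 0 < T)
    (hα : 0 < α) {f : ℝ → E}
    (hf : ∀ s t : ℝ, s ∈ Icc 0 T → t ∈ Icc 0 T → ‖f t - f s‖ ≤ C * |t - s| ^ α) :
    ∀ t ∈ Icc (0:ℝ) T, ‖f t‖ ≤ ‖f 0‖ + |C| * T ^ α := by
  intro t ht
  have h0 : (0:ℝ) ∈ Icc (0:ℝ) T := ⟨le_rfl, hT.le⟩
  have h := hf 0 t h0 ht
  have h1 : |t - 0| ^ α ≤ T ^ α := by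
    rw [sub_zero, abs_of_nonneg ht.1]
    exact Real.rpow_le_rpow ht.1 ht.2 hα.le
  have h2 : C * |t - 0| ^ α ≤ |C| * T ^ α := by
    calc C * |t - 0| ^ α ≤ |C| * |t - 0| ^ α :=
          mul_le_mul_of_nonneg_right (le_abs_self C) (by positivity)
      _ ≤ |C| * T ^ α := mul_le_mul_of_nonneg_left h1 (abs_nonneg C)
  calc ‖f t‖ ≤ ‖f 0‖ + ‖f t - f 0‖ := by
        simpa using norm_add_le (f 0) (f t - f 0)
    _ ≤ ‖f 0‖ + |C| * T ^ α := by linarith [h.trans h2]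

/-- If `(Y, Y')` and `(Z, Z')` are real-valued controlled paths with respect to an
`α`-Hölder path `X : [0,T] → ℝ^d`, then the product `(YZ, Y'Z + YZ')` is also a
controlled path with respect to `X`: `YZ` and `Z • Y' + Y • Z'` are `α`-Hölder
and the remainder `(YZ)_t - (YZ)_s - (Z_s • Y'_s + Y_s • Z'_s)(X_t - X_s)` is
`2α`-Hölder. -/
theorem controlled_path_mul
    {d : ℕ} (T α : ℝ) (hT : 0 < T) (hα : 1/3 < α) (hα' : α ≤ 1/2)
    (X : ℝ → (Fin d → ℝ))
    (CX : ℝ) (hX : ∀ s t : ℝ, s ∈ Set.Icc 0 T → t ∈ Set.Icc 0 T →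
      ‖X t - X s‖ ≤ CX * |t - s| ^ α)
    (Y Z : ℝ → ℝ)
    (Y' Z' : ℝ → ((Fin d → ℝ) →L[ℝ] ℝ))
    (CY CZ CY' CZ' CRY CRZ : ℝ)
    (hY : ∀ s t : ℝ, s ∈ Set.Icc 0 T → t ∈ Set.Icc 0 T →
      |Y t - Y s| ≤ CY * |t - s| ^ α)
    (hZ : ∀ s t : ℝ, s ∈ Set.Icc 0 T → t ∈ Set.Icc 0 T →
      |Z t - Z s| ≤ CZ * |t - s| ^ α)
    (hY' : ∀ s t : ℝ, s ∈ Set.Icc 0 T → t ∈ Set.Icc 0 T →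
      ‖Y' t - Y' s‖ ≤ CY' * |t - s| ^ α)
    (hZ' : ∀ s t : ℝ, s ∈ Set.Icc 0 T → t ∈ Set.Icc 0 T →
      ‖Z' t - Z' s‖ ≤ CZ' * |t - s| ^ α)
    (hRY : ∀ s t : ℝ, s ∈ Set.Icc 0 T → t ∈ Set.Icc 0 T →
      |Y t - Y s - Y' s (X t - X s)| ≤ CRY * |t - s| ^ (2 * α))
    (hRZ : ∀ s t : ℝ, s ∈ Set.Icc 0 T → t ∈ Set.Icc 0 T →
      |Z t - Z s - Z' s (X t - X s)| ≤ CRZ * |t - s| ^ (2 * α)) :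
    (∃ C : ℝ, ∀ s t : ℝ, s ∈ Set.Icc 0 T → t ∈ Set.Icc 0 T →
      |Y t * Z t - Y s * Z s| ≤ C * |t - s| ^ α) ∧
    (∃ C : ℝ, ∀ s t : ℝ, s ∈ Set.Icc 0 T → t ∈ Set.Icc 0 T →
      ‖(Z t • Y' t + Y t • Z' t) - (Z s • Y' s + Y s • Z' s)‖
        ≤ C * |t - s| ^ α) ∧
    (∃ C : ℝ, ∀ s t : ℝ, s ∈ Set.Icc 0 T → t ∈ Set.Icc 0 T →
      |Y t * Z t - Y s * Z s - (Z s • Y' s + Y s • Z' s) (X t - X s)|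
        ≤ C * |t - s| ^ (2 * α)) := by
  have hα0 : (0:ℝ) < α := by linarith
  set MY : ℝ := |Y 0| + |CY| * T ^ α with hMYdef
  set MZ : ℝ := |Z 0| + |CZ| * T ^ α with hMZdef
  set MY' : ℝ := ‖Y' 0‖ + |CY'| * T ^ α with hMY'def
  set MZ' : ℝ := ‖Z' 0‖ + |CZ'| * T ^ α with hMZ'def
  have hBY : ∀ t ∈ Icc (0:ℝ) T, |Y t| ≤ MY := by
    intro t ht
    simpa [Real.norm_eq_abs] using
      holder_bounded_aux hT hα0 (f := Y)
        (fun s t hs ht => by simpa [Real.norm_eq_abs] using hY s t hs ht) t ht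
  have hBZ : ∀ t ∈ Icc (0:ℝ) T, |Z t| ≤ MZ := by
    intro t ht
    simpa [Real.norm_eq_abs] using
      holder_bounded_aux hT hα0 (f := Z)
        (fun s t hs ht => by simpa [Real.norm_eq_abs] using hZ s t hs ht) t ht
  have hBY' : ∀ t ∈ Icc (0:ℝ) T, ‖Y' t‖ ≤ MY' :=
    holder_bounded_aux hT hα0 hY'
  have hBZ' : ∀ t ∈ Icc (0:ℝ) T, ‖Z' t‖ ≤ MZ' :=
    holder_bounded_aux hT hα0 hZ'
  have hMY0 : 0 ≤ MY := le_trans (abs_nonneg _) (hBY 0 ⟨le_rfl, hT.le⟩)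
  have hMZ0 : 0 ≤ MZ := le_trans (abs_nonneg _) (hBZ 0 ⟨le_rfl, hT.le⟩)
  have hMY'0 : 0 ≤ MY' := le_trans (norm_nonneg _) (hBY' 0 ⟨le_rfl, hT.le⟩)
  have hMZ'0 : 0 ≤ MZ' := le_trans (norm_nonneg _) (hBZ' 0 ⟨le_rfl, hT.le⟩)
  refine ⟨⟨MY * |CZ| + MZ * |CY|, ?_⟩,
      ⟨MZ * |CY'| + MY' * |CZ| + MY * |CZ'| + MZ' * |CY|, ?_⟩,
      ⟨MZ * |CRY| + MY * |CRZ| + |CY| * |CZ|, ?_⟩⟩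
  · intro s t hs ht
    have e : Y t * Z t - Y s * Z s = Y t * (Z t - Z s) + (Y t - Y s) * Z s := by ring
    rw [e]
    have hzz : |Z t - Z s| ≤ |CZ| * |t - s| ^ α :=
      (hZ s t hs ht).trans (mul_le_mul_of_nonneg_right (le_abs_self CZ) (by positivity))
    have hyy : |Y t - Y s| ≤ |CY| * |t - s| ^ α :=
      (hY s t hs ht).trans (mul_le_mul_of_nonneg_right (le_abs_self CY) (by positivity))
    calc |Y t * (Z t - Z s) + (Y t - Y s) * Z s|
        ≤ |Y t| * |Z t - Z s| + |Y t - Y s| * |Z s| := by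
          refine (abs_add_le _ _).trans ?_
          rw [abs_mul, abs_mul]
      _ ≤ MY * (|CZ| * |t - s| ^ α) + (|CY| * |t - s| ^ α) * MZ := by
          gcongr
          exacts [hBY t ht, hBZ s hs]
      _ = (MY * |CZ| + MZ * |CY|) * |t - s| ^ α := by ring
  · intro s t hs ht
    have e : (Z t • Y' t + Y t • Z' t) - (Z s • Y' s + Y s • Z' s)
        = Z t • (Y' t - Y' s) + (Z t - Z s) • Y' s
          + (Y t • (Z' t - Z' s) + (Y t - Y s) • Z' s) := by
      module
    rw [e]
    have h1 : ‖Z t • (Y' t - Y' s)‖ ≤ MZ * (|CY'| * |t - s| ^ α) := by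
      refine (ContinuousLinearMap.opNorm_smul_le _ _).trans ?_
      refine mul_le_mul ?_ ?_ (norm_nonneg _) hMZ0
      · rw [Real.norm_eq_abs]; exact hBZ t ht
      · exact (hY' s t hs ht).trans
          (mul_le_mul_of_nonneg_right (le_abs_self CY') (by positivity))
    have h2 : ‖(Z t - Z s) • Y' s‖ ≤ (|CZ| * |t - s| ^ α) * MY' := by
      refine (ContinuousLinearMap.opNorm_smul_le _ _).trans ?_
      refine mul_le_mul ?_ (hBY' s hs) (norm_nonneg _) (by positivity)
      rw [Real.norm_eq_abs]
      exact (hZ s t hs ht).trans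
        (mul_le_mul_of_nonneg_right (le_abs_self CZ) (by positivity))
    have h3 : ‖Y t • (Z' t - Z' s)‖ ≤ MY * (|CZ'| * |t - s| ^ α) := by
      refine (ContinuousLinearMap.opNorm_smul_le _ _).trans ?_
      refine mul_le_mul ?_ ?_ (norm_nonneg _) hMY0
      · rw [Real.norm_eq_abs]; exact hBY t ht
      · exact (hZ' s t hs ht).trans
          (mul_le_mul_of_nonneg_right (le_abs_self CZ') (by positivity))
    have h4 : ‖(Y t - Y s) • Z' s‖ ≤ (|CY| * |t - s| ^ α) * MZ' := by
      refine (ContinuousLinearMap.opNorm_smul_le _ _).trans ?_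
      refine mul_le_mul ?_ (hBZ' s hs) (norm_nonneg _) (by positivity)
      rw [Real.norm_eq_abs]
      exact (hY s t hs ht).trans
        (mul_le_mul_of_nonneg_right (le_abs_self CY) (by positivity))
    calc ‖Z t • (Y' t - Y' s) + (Z t - Z s) • Y' s
          + (Y t • (Z' t - Z' s) + (Y t - Y s) • Z' s)‖
        ≤ ‖Z t • (Y' t - Y' s) + (Z t - Z s) • Y' s‖
          + ‖Y t • (Z' t - Z' s) + (Y t - Y s) • Z' s‖ := norm_add_le _ _
      _ ≤ (‖Z t • (Y' t - Y' s)‖ + ‖(Z t - Z s) • Y' s‖)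
          + (‖Y t • (Z' t - Z' s)‖ + ‖(Y t - Y s) • Z' s‖) := by
          gcongr <;> exact norm_add_le _ _
      _ ≤ (MZ * (|CY'| * |t - s| ^ α) + (|CZ| * |t - s| ^ α) * MY')
          + (MY * (|CZ'| * |t - s| ^ α) + (|CY| * |t - s| ^ α) * MZ') := by
          gcongr
      _ = (MZ * |CY'| + MY' * |CZ| + MY * |CZ'| + MZ' * |CY|) * |t - s| ^ α := by
          ring
  · intro s t hs ht
    have hrw : (Z s • Y' s + Y s • Z' s) (X t - X s)
        = Z s * (Y' s (X t - X s)) + Y s * (Z' s (X t - X s)) := by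
      simp [ContinuousLinearMap.add_apply, ContinuousLinearMap.smul_apply, smul_eq_mul]
    rw [hrw]
    set A := (Y' s) (X t - X s)
    set B := (Z' s) (X t - X s)
    have e : Y t * Z t - Y s * Z s - (Z s * A + Y s * B)
        = Z s * (Y t - Y s - A) + Y s * (Z t - Z s - B)
          + (Y t - Y s) * (Z t - Z s) := by ring
    rw [e]
    have h2a : |t - s| ^ (2 * α) = |t - s| ^ α * |t - s| ^ α := by
      rw [two_mul, Real.rpow_add' (abs_nonneg _) (by linarith)]
    have hry : |Y t - Y s - A| ≤ |CRY| * |t - s| ^ (2 * α) :=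
      (hRY s t hs ht).trans
        (mul_le_mul_of_nonneg_right (le_abs_self CRY) (by positivity))
    have hrz : |Z t - Z s - B| ≤ |CRZ| * |t - s| ^ (2 * α) :=
      (hRZ s t hs ht).trans
        (mul_le_mul_of_nonneg_right (le_abs_self CRZ) (by positivity))
    have hyy : |Y t - Y s| ≤ |CY| * |t - s| ^ α :=
      (hY s t hs ht).trans (mul_le_mul_of_nonneg_right (le_abs_self CY) (by positivity))
    have hzz : |Z t - Z s| ≤ |CZ| * |t - s| ^ α :=
      (hZ s t hs ht).trans (mul_le_mul_of_nonneg_right (le_abs_self CZ) (by positivity))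
    calc |Z s * (Y t - Y s - A) + Y s * (Z t - Z s - B) + (Y t - Y s) * (Z t - Z s)|
        ≤ |Z s * (Y t - Y s - A) + Y s * (Z t - Z s - B)|
          + |(Y t - Y s) * (Z t - Z s)| := abs_add_le _ _
      _ ≤ (|Z s| * |Y t - Y s - A| + |Y s| * |Z t - Z s - B|)
          + |Y t - Y s| * |Z t - Z s| := by
          gcongr
          · refine (abs_add_le _ _).trans ?_
            rw [abs_mul, abs_mul]
          · rw [abs_mul]
      _ ≤ (MZ * (|CRY| * |t - s| ^ (2 * α)) + MY * (|CRZ| * |t - s| ^ (2 * α)))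
          + (|CY| * |t - s| ^ α) * (|CZ| * |t - s| ^ α) := by
          gcongr
          exacts [hBZ s hs, hBY s hs]
      _ = (MZ * |CRY| + MY * |CRZ| + |CY| * |CZ|) * |t - s| ^ (2 * α) := by
          rw [h2a]; ring
end
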